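/- arXiv:1912.10699 — 2 statements merged into one kernel-verified Lean document; each statement's English description precedes it below -/
import Mathlib

section
/- There exist absolute constants c₁,c₂>0 such that for every N∈ℕ, every p∈(0,1), every β>0, every function g:Γ_N→[0,∞) not identically zero, and every t>0, ℙ_J( |N(F_{N,g}−p_{N,g})| ≥ t ) ≤ c₁·exp(−2c₂p²t²/β²). -/
open MeasureTheory Filter Finset
open scoped Classical ENNReal NNReal Topology

noncomputable section

namespace RDCW

/-- The real value of a Boolean spin. -/
def spin (b : Bool) : ℝ := if b then 1 else -1

/-- Spin configurations on `N` vertices. -/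
abbrev Conf (N : ℕ) := Fin N → Bool

/-- Empirical magnetisation. -/
def mag {N : ℕ} (σ : Conf N) : ℝ := (N : ℝ)⁻¹ * ∑ i, spin (σ i)

/-- The set `Γ_N` of attainable magnetisations. -/
def Gamma (N : ℕ) : Set ℝ := Set.range (fun σ : Conf N => mag σ)

/-- `Γ_N` as a finite set. -/
def GammaF (N : ℕ) : Finset ℝ :=
  Finset.image (fun σ : Conf N => mag σ) Finset.univ

/-- Configurations with magnetisation `m`, as a finset. -/
def level (N : ℕ) (m : ℝ) : Finset (Conf N) := Finset.univ.filter fun σ => mag σ = m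

/-- Configurations with magnetisation `m`, as a set (`S_N[m]`). -/
def SLev (N : ℕ) (m : ℝ) : Set (Conf N) := {σ | mag σ = m}

/-- The entropy `I_N(m) = -(1/N) log |S_N[m]|`
(for `m ∈ Γ_N` the cardinality is the binomial coefficient `C(N, (1+m)N/2)`). -/
def IN (N : ℕ) (m : ℝ) : ℝ := -(N : ℝ)⁻¹ * Real.log ((level N m).card)

/-- Two configurations differ by a single spin flip. -/
def Nbr {N : ℕ} (σ σ' : Conf N) : Prop :=
  (Finset.univ.filter fun i => σ i ≠ σ' i).card = 1

/-- The index set of the couplings: pairs `i < j`. -/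
abbrev CIdx (N : ℕ) := {ij : Fin N × Fin N // ij.1 < ij.2}

/-- A realisation of the random couplings. -/
abbrev Couplings (N : ℕ) := CIdx N → Bool

/-- Real value of a coupling. -/
def Jval {N : ℕ} (J : Couplings N) (e : CIdx N) : ℝ := if J e then 1 else 0

/-- The RDCW Hamiltonian. -/
def H (N : ℕ) (p h : ℝ) (J : Couplings N) (σ : Conf N) : ℝ :=
  -((N : ℝ) * p)⁻¹ * ∑ e : CIdx N, Jval J e * spin (σ e.1.1) * spin (σ e.1.2)
    - h * ∑ i, spin (σ i)

/-- The Curie--Weiss Hamiltonian. -/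
def Hcw (N : ℕ) (h : ℝ) (σ : Conf N) : ℝ :=
  -(N : ℝ)⁻¹ * ∑ e : CIdx N, spin (σ e.1.1) * spin (σ e.1.2) - h * ∑ i, spin (σ i)

/-- The centred random part `Δ` of the Hamiltonian. -/
def Delta (N : ℕ) (p : ℝ) (J : Couplings N) (σ : Conf N) : ℝ :=
  -((N : ℝ) * p)⁻¹ * ∑ e : CIdx N, (Jval J e - p) * spin (σ e.1.1) * spin (σ e.1.2)

/-- Partition function for a Hamiltonian. -/
def Z (N : ℕ) (β : ℝ) (Ham : Conf N → ℝ) : ℝ := ∑ σ : Conf N, Real.exp (-β * Ham σ)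

/-- Gibbs measure for a Hamiltonian. -/
def gibbs (N : ℕ) (β : ℝ) (Ham : Conf N → ℝ) (σ : Conf N) : ℝ :=
  Real.exp (-β * Ham σ) / Z N β Ham

/-- Off-diagonal Metropolis rates. -/
def flipP (N : ℕ) (β : ℝ) (Ham : Conf N → ℝ) (σ σ' : Conf N) : ℝ :=
  if Nbr σ σ' then (N : ℝ)⁻¹ * Real.exp (-β * max (Ham σ' - Ham σ) 0) else 0

/-- Metropolis (Glauber) transition probabilities. -/
def transP (N : ℕ) (β : ℝ) (Ham : Conf N → ℝ) (σ σ' : Conf N) : ℝ :=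
  if σ' = σ then 1 - ∑ η ∈ Finset.univ.erase σ, flipP N β Ham σ η
  else flipP N β Ham σ σ'

/-- Probability of a finite trajectory of a Markov chain with kernel `P`. -/
def pathProb {S : Type*} (P : S → S → ℝ) : S → List S → ℝ
  | _, [] => 1
  | x, y :: l => P x y * pathProb P y l

/-- `FirstHit A B l` says that the (time ≥ 1) trajectory `l` stays outside `A ∪ B`
until its final state, which belongs to `B`; this is the cylinder event
`{τ_B < τ_A, τ_B = l.length}`. -/
def FirstHit {S : Type*} (A B : Set S) : List S → Prop
  | [] => False
  | [x] => x ∈ B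
  | x :: y :: l => x ∉ A ∧ x ∉ B ∧ FirstHit A B (y :: l)

/-- `ℙ_σ(τ_B < τ_A)` for the chain with kernel `P`. -/
def hitProb {S : Type*} (P : S → S → ℝ) (σ : S) (A B : Set S) : ℝ :=
  ∑' l : List S, if FirstHit A B l then pathProb P σ l else 0

/-- `𝔼_σ[τ_B]` for the chain with kernel `P`. -/
def hitTimeExp {S : Type*} (P : S → S → ℝ) (σ : S) (B : Set S) : ℝ :=
  ∑' l : List S, if FirstHit (∅ : Set S) B l then (l.length : ℝ) * pathProb P σ l else 0

/-- The harmonic function `h_{A,B}`. -/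
def harm {S : Type*} (P : S → S → ℝ) (A B : Set S) (σ : S) : ℝ :=
  if σ ∈ A then 1 else if σ ∈ B then 0 else hitProb P σ B A

/-- Capacity via the Dirichlet principle. -/
def capac (N : ℕ) (β : ℝ) (Ham : Conf N → ℝ) (A B : Set (Conf N)) : ℝ :=
  sInf {x : ℝ | ∃ f : Conf N → ℝ, (∀ σ, 0 ≤ f σ ∧ f σ ≤ 1) ∧
    (∀ σ ∈ A, f σ = 1) ∧ (∀ σ ∈ B, f σ = 0) ∧
    x = ∑ σ : Conf N, ∑ σ' : Conf N,
      gibbs N β Ham σ * transP N β Ham σ σ' * (f σ - f σ') ^ 2}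

/-- Bernoulli measure on `Bool`. -/
def bern (p : ℝ) : Measure Bool :=
  p.toNNReal • Measure.dirac true + (1 - p).toNNReal • Measure.dirac false

instance (p : ℝ) : IsFiniteMeasure (bern p) := by unfold bern; infer_instance

/-- The joint law `ℙ_J` of the i.i.d. Bernoulli(p) couplings. -/
def PJ (N : ℕ) (p : ℝ) : Measure (Couplings N) := Measure.pi fun _ => bern p

/-- `E(m) = -m²/2 - hm`. -/
def Em (h m : ℝ) : ℝ := -m ^ 2 / 2 - h * m

/-- Transition probabilities of the Curie--Weiss magnetisation chain on `ℝ ⊇ Γ_N`. -/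
def rCW (N : ℕ) (β h : ℝ) (m m' : ℝ) : ℝ :=
  if m' = m + 2 / N then Real.exp (-β * N * max (Em h m' - Em h m) 0) * ((1 - m) / 2)
  else if m' = m - 2 / N then Real.exp (-β * N * max (Em h m' - Em h m) 0) * ((1 + m) / 2)
  else if m' = m then
    1 - Real.exp (-β * N * max (Em h (m + 2 / N) - Em h m) 0) * ((1 - m) / 2)
      - Real.exp (-β * N * max (Em h (m - 2 / N) - Em h m) 0) * ((1 + m) / 2)
  else 0

/-- The entropy `I(m)`. -/
def Ient (m : ℝ) : ℝ :=
  (1 - m) / 2 * Real.log ((1 - m) / 2) + (1 + m) / 2 * Real.log ((1 + m) / 2)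

/-- The Curie--Weiss free energy `f_β(m) = E(m) + β⁻¹ I(m)`. -/
def fE (β h m : ℝ) : ℝ := Em h m + β⁻¹ * Ient m

/-- The double-well structure of `f_β` in the metastable regime `β > 1`, `h > 0` small:
two local minima `m_- < 0 < m_+` and a local maximum `m* ∈ (m_-, m_+)`, all solving
`m = tanh(β(m+h))`, with `f_β(m_-) > f_β(m_+)`. -/
structure DoubleWell (β h mminus mstar mplus : ℝ) : Prop where
  lt_star : mminus < mstar
  star_lt : mstar < mplus
  neg : mminus < 0
  pos : 0 < mplus
  locmin_minus : IsLocalMin (fE β h) mminus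
  locmin_plus : IsLocalMin (fE β h) mplus
  locmax_star : IsLocalMax (fE β h) mstar
  fix_minus : mminus = Real.tanh (β * (mminus + h))
  fix_star : mstar = Real.tanh (β * (mstar + h))
  fix_plus : mplus = Real.tanh (β * (mplus + h))
  f_lt : fE β h mplus < fE β h mminus

/-- `y` is a point of `s` closest to `x`. -/
def ClosestIn (s : Set ℝ) (x y : ℝ) : Prop := y ∈ s ∧ ∀ z ∈ s, |x - y| ≤ |x - z|

/-- `α = β²(1-p)/(4p)`. -/
def alphaC (β p : ℝ) : ℝ := β ^ 2 * (1 - p) / (4 * p)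

/-- `κ = α + sup_{η∈(0,1)} [log η - β √(2α + log(c₁/(1-η)²)) / (p √(2c₂))]`. -/
def kappaC (β p c₁ c₂ : ℝ) : ℝ :=
  alphaC β p + sSup ((fun η : ℝ => Real.log η -
      β * Real.sqrt (2 * alphaC β p + Real.log (c₁ / (1 - η) ^ 2)) /
        (p * Real.sqrt (2 * c₂))) '' Set.Ioo (0 : ℝ) 1)

/-- Talagrand's concentration inequality with constants `c₁, c₂`: for every `M`, every
convex function `G` which is 1-Lipschitz w.r.t. the Euclidean norm, and independent
random variables `X₁, …, X_M` (jointly a product measure) bounded by `K`,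
`ℙ(|G(X) - 𝔼 G(X)| ≥ tK) ≤ c₁ e^{-c₂ t²}`. -/
def IsTalagrand (c₁ c₂ : ℝ) : Prop :=
  ∀ (M : ℕ) (G : (Fin M → ℝ) → ℝ),
    ConvexOn ℝ Set.univ G →
    (∀ x y : Fin M → ℝ, |G x - G y| ≤ Real.sqrt (∑ i, (x i - y i) ^ 2)) →
    ∀ (μ : Fin M → Measure ℝ) [∀ i, IsProbabilityMeasure (μ i)],
      ∀ K : ℝ, 0 < K → (∀ i, ∀ᵐ x ∂μ i, |x| ≤ K) →
        ∀ t : ℝ, 0 ≤ t →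
          (Measure.pi μ {x | t * K ≤ |G x - ∫ y, G y ∂Measure.pi μ|}).toReal ≤
            c₁ * Real.exp (-c₂ * t ^ 2)

/-- `𝒵_{N,g}` (with `e^{-βΔ}`). -/
def Zg (N : ℕ) (p β : ℝ) (g : ℝ → ℝ) (J : Couplings N) : ℝ :=
  ∑ m ∈ GammaF N, g m * ∑ σ ∈ level N m, Real.exp (-β * Delta N p J σ)

/-- The variant of `𝒵_{N,g}` with `e^{+βΔ}`. -/
def ZgPlus (N : ℕ) (p β : ℝ) (g : ℝ → ℝ) (J : Couplings N) : ℝ :=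
  ∑ m ∈ GammaF N, g m * ∑ σ ∈ level N m, Real.exp (β * Delta N p J σ)

/-- `F_{N,g} = (1/N) log 𝒵_{N,g}`. -/
def Fg (N : ℕ) (p β : ℝ) (g : ℝ → ℝ) (J : Couplings N) : ℝ :=
  (N : ℝ)⁻¹ * Real.log (Zg N p β g J)

/-- `p_{N,g} = 𝔼[F_{N,g}]`. -/
def pg (N : ℕ) (p β : ℝ) (g : ℝ → ℝ) : ℝ := ∫ J, Fg N p β g J ∂PJ N p

/-- `∑_{m∈Γ_N} g(m) e^{-N I_N(m)}`. -/
def entSum (N : ℕ) (g : ℝ → ℝ) : ℝ := ∑ m ∈ GammaF N, g m * Real.exp (-(N : ℝ) * IN N m)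

/-- Mesoscopic measure `Q_{β,N}(m)`. -/
def Qmeso (N : ℕ) (β : ℝ) (Ham : Conf N → ℝ) (m : ℝ) : ℝ :=
  ∑ σ ∈ level N m, gibbs N β Ham σ

/-- `𝔼_{ν_{A,B}}[τ_B]`, where `ν_{A,B}` is the last-exit biased distribution on `A`. -/
def lastExitMeanHit (N : ℕ) (β : ℝ) (Ham : Conf N → ℝ) (A B : Set (Conf N)) : ℝ :=
  (∑ σ ∈ Finset.univ.filter (· ∈ A),
      gibbs N β Ham σ * hitProb (transP N β Ham) σ A B * hitTimeExp (transP N β Ham) σ B) /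
  (∑ σ ∈ Finset.univ.filter (· ∈ A), gibbs N β Ham σ * hitProb (transP N β Ham) σ A B)

/-- The unit flow `φ_N` on the magnetisation space. -/
def phiFlow (N : ℕ) (m₁ m₂ m m' : ℝ) : ℝ :=
  if m' = m + 2 / N ∧ m₁ ≤ m ∧ m ≤ m₂ - 2 / N then
    ((1 - m) * N / 2 * Real.exp (-(N : ℝ) * IN N m))⁻¹
  else if m' = m - 2 / N ∧ m₁ + 2 / N ≤ m ∧ m ≤ m₂ then
    -((1 + m) * N / 2 * Real.exp (-(N : ℝ) * IN N m))⁻¹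
  else 0

/-- `U_δ = {m ∈ [-1,1] : f_β(m) ≤ f_β(m_-) + δ}`. -/
def Uset (β h mminus δ : ℝ) : Set ℝ :=
  {m | m ∈ Set.Icc (-1 : ℝ) 1 ∧ fE β h m ≤ fE β h mminus + δ}

/-- `U_δ(m_+)`: the connected component of `U_δ` containing `m_+`. -/
def Ucomp (β h mminus mplus δ : ℝ) : Set ℝ := connectedComponentIn (Uset β h mminus δ) mplus

/-- The function `ℓ_N`. -/
def ellN (β h mpN x : ℝ) : ℝ :=
  (1 / 2) * (x * (Real.log 2 + β * |2 - 2 * h| + 1)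
    - (1 - mpN + x) * Real.log (1 - mpN + x) + (1 - mpN) * Real.log (1 - mpN))

/-- Specification of `δ_N`. -/
def DeltaNSpec (β h mminus mplus δ : ℝ) (N : ℕ) (d : ℝ) : Prop :=
  IsGreatest {d' : ℝ | 0 < d' ∧ d' ≤ δ ∧
    ∃ m ∈ Ucomp β h mminus mplus δ ∩ Gamma N, m < mplus ∧ fE β h m = fE β h mminus + d'} d

/-- Specification of `m_{δ_N}`: the left endpoint of `U_{δ_N}(m_+) ∩ Γ_N`,
with `f_β(m_{δ_N}) = f_β(m_-) + δ_N`. -/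
def MdeltaSpec (β h mminus mplus dN : ℝ) (N : ℕ) (x : ℝ) : Prop :=
  IsLeast (Ucomp β h mminus mplus dN ∩ Gamma N) x ∧ fE β h x = fE β h mminus + dN

/-- Specification of `ε_N`. -/
def EpsNSpec (β h mminus mplus dN ε : ℝ) (N : ℕ) (e : ℝ) : Prop :=
  IsGreatest {e' : ℝ | 0 < e' ∧ e' ≤ ε ∧
    ∃ m ∈ Ucomp β h mminus mplus dN ∩ Gamma N, m < mplus ∧ fE β h m = fE β h mplus + e'} e

/-- Specification of `m_{ε_N}`. -/
def MepsSpec (β h mminus mplus dN eN : ℝ) (N : ℕ) (x : ℝ) : Prop :=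
  x ∈ Ucomp β h mminus mplus dN ∩ Gamma N ∧ x < mplus ∧ fE β h x = fE β h mplus + eN

/-! Flipping a single coupling `J_e` changes `Δ(σ)` by exactly `±1/(Np)` for every `σ`, so it
changes `log 𝒵_{N,g}` by at most `β/(Np)`. McDiarmid's bounded-differences inequality for the
at most `N²` independent Bernoulli couplings then gives the claim with `c₁ = 2`, `c₂ = 1`.
McDiarmid's inequality itself comes from Hoeffding's lemma for a two-point law, applied one
coordinate at a time to tensorise the moment generating function, and Chernoff's bound. -/

open Real Function

section BernoulliProduct

variable {ι : Type*} {p : ℝ}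

lemma bern_isProbabilityMeasure (hp0 : 0 ≤ p) (hp1 : p ≤ 1) : IsProbabilityMeasure (bern p) := by
  constructor
  rw [bern, Measure.add_apply, Measure.smul_apply, Measure.smul_apply, measure_univ,
    measure_univ, ENNReal.smul_def, ENNReal.smul_def, smul_eq_mul, smul_eq_mul, mul_one, mul_one,
    ← ENNReal.coe_add, ← Real.toNNReal_add hp0 (sub_nonneg.2 hp1)]
  simp

lemma integral_bern (hp0 : 0 ≤ p) (hp1 : p ≤ 1) (f : Bool → ℝ) :
    ∫ b, f b ∂bern p = p * f true + (1 - p) * f false := by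
  rw [bern, integral_add_measure .of_finite .of_finite, integral_smul_nnreal_measure,
    integral_smul_nnreal_measure, integral_dirac, integral_dirac, NNReal.smul_def,
    NNReal.smul_def, Real.coe_toNNReal _ hp0, Real.coe_toNNReal _ (sub_nonneg.2 hp1),
    smul_eq_mul, smul_eq_mul]

/-- Hoeffding's lemma for a centred two-point distribution. -/
lemma two_point_exp_le {q a b : ℝ} (hq0 : 0 ≤ q) (hq1 : q ≤ 1)
    (hmean : q * a + (1 - q) * b = 0) :
    q * exp a + (1 - q) * exp b ≤ exp ((a - b) ^ 2 / 8) := by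
  have := bern_isProbabilityMeasure hq0 hq1
  have h := ProbabilityTheory.mgf_le_of_mem_Icc_of_integral_eq_zero (μ := bern q)
    (X := fun x => if x then a else b) (a := min a b) (b := max a b) (t := 1)
    (Measurable.of_discrete).aemeasurable
    (ae_of_all _ fun x => by cases x <;> simp)
    (by rw [integral_bern hq0 hq1]; simpa using hmean) one_pos
  rw [ProbabilityTheory.mgf, integral_bern hq0 hq1] at h
  simp only [one_mul, if_true, Bool.false_eq_true, if_false, one_pow, mul_one] at h
  convert h using 2
  rw [coe_nnnorm, Real.norm_eq_abs, max_sub_min_eq_abs, abs_abs, div_pow, sq_abs]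
  ring

def piBernWeight [Fintype ι] (p : ℝ) (J : ι → Bool) : ℝ := ∏ i, if J i then p else 1 - p

def piBernMean [Fintype ι] [DecidableEq ι] (p : ℝ) (f : (ι → Bool) → ℝ) : ℝ :=
  ∑ J, piBernWeight p J * f J

def BoundedDiff [DecidableEq ι] (c : ℝ) (f : (ι → Bool) → ℝ) : Prop :=
  ∀ i J, |f (update J i true) - f (update J i false)| ≤ c

lemma piBernWeight_nonneg [Fintype ι] (hp0 : 0 ≤ p) (hp1 : p ≤ 1) (J : ι → Bool) :
    0 ≤ piBernWeight p J :=
  prod_nonneg fun i _ => by split <;> linarith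

lemma piBernMean_mono [Fintype ι] [DecidableEq ι] (hp0 : 0 ≤ p) (hp1 : p ≤ 1)
    {f g : (ι → Bool) → ℝ} (h : ∀ J, f J ≤ g J) : piBernMean p f ≤ piBernMean p g :=
  sum_le_sum fun J _ => mul_le_mul_of_nonneg_left (h J) (piBernWeight_nonneg hp0 hp1 J)

lemma piBernMean_mul_const [Fintype ι] [DecidableEq ι] (f : (ι → Bool) → ℝ) (a : ℝ) :
    piBernMean p (fun J => f J * a) = piBernMean p f * a := by
  simp only [piBernMean, sum_mul, mul_assoc]

def averageHead {n : ℕ} (p : ℝ) (f : (Fin (n + 1) → Bool) → ℝ) (K : Fin n → Bool) : ℝ :=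
  p * f (Fin.cons true K) + (1 - p) * f (Fin.cons false K)

lemma piBernMean_fin_succ {n : ℕ} (f : (Fin (n + 1) → Bool) → ℝ) :
    piBernMean p f = piBernMean p (averageHead p f) := by
  rw [piBernMean, ← Fintype.sum_equiv (Fin.consEquiv fun _ => Bool)
    (fun x => piBernWeight p (Fin.cons x.1 x.2 : Fin (n + 1) → Bool) * f (Fin.cons x.1 x.2))
    (fun J => piBernWeight p J * f J) fun _ => rfl,
    Fintype.sum_prod_type, Fintype.sum_bool, ← sum_add_distrib, piBernMean]
  refine sum_congr rfl fun K _ => ?_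
  simp only [averageHead, piBernWeight, Fin.prod_univ_succ, Fin.cons_zero, Fin.cons_succ,
    Bool.false_eq_true, ↓reduceIte]
  ring

lemma piBernMean_comp_equiv [Fintype ι] [DecidableEq ι] {κ : Type*} [Fintype κ] [DecidableEq κ]
    (e : ι ≃ κ) (f : (ι → Bool) → ℝ) :
    piBernMean p f = piBernMean p (fun K : κ → Bool => f (K ∘ e)) := by
  rw [piBernMean, ← (Equiv.arrowCongr e (Equiv.refl Bool)).symm.sum_comp, piBernMean]
  refine sum_congr rfl fun K _ => ?_
  have hK : (Equiv.arrowCongr e (Equiv.refl Bool)).symm K = K ∘ e := rfl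
  rw [hK, piBernWeight, piBernWeight, ← e.prod_comp fun j => if K j then p else 1 - p]
  rfl

lemma BoundedDiff.comp_equiv {κ : Type*} [DecidableEq ι] [DecidableEq κ] {c : ℝ}
    {f : (ι → Bool) → ℝ} (hf : BoundedDiff c f) (e : ι ≃ κ) :
    BoundedDiff c (fun K : κ → Bool => f (K ∘ e)) := fun j K => by
  simpa only [update_comp_equiv] using hf (e.symm j) (K ∘ e)

lemma boundedDiff_averageHead (hp0 : 0 ≤ p) (hp1 : p ≤ 1) {n : ℕ} {c : ℝ}
    {f : (Fin (n + 1) → Bool) → ℝ} (hf : BoundedDiff c f) : BoundedDiff c (averageHead p f) :=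
  fun i K => by
    have hT := hf i.succ (Fin.cons true K)
    have hF := hf i.succ (Fin.cons false K)
    simp only [← Fin.cons_update] at hT hF
    calc |averageHead p f (update K i true) - averageHead p f (update K i false)|
        = |p * (f (Fin.cons true (update K i true)) - f (Fin.cons true (update K i false)))
            + (1 - p) * (f (Fin.cons false (update K i true))
              - f (Fin.cons false (update K i false)))| := by
          simp only [averageHead]; congr 1; ring
      _ ≤ p * c + (1 - p) * c := by
        refine (abs_add_le _ _).trans (add_le_add ?_ ?_) <;>
          rw [abs_mul, abs_of_nonneg (by linarith)] <;> gcongr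
      _ = c := by ring

lemma BoundedDiff.exp_cons_le (hp0 : 0 ≤ p) (hp1 : p ≤ 1) {n : ℕ} {c : ℝ}
    {f : (Fin (n + 1) → Bool) → ℝ} (hf : BoundedDiff c f) (s μ : ℝ) (K : Fin n → Bool) :
    p * exp (s * (f (Fin.cons true K) - μ)) + (1 - p) * exp (s * (f (Fin.cons false K) - μ)) ≤
      exp (s * (averageHead p f K - μ)) * exp (s ^ 2 * c ^ 2 / 8) := by
  set m := averageHead p f K
  have hdiff := hf 0 (Fin.cons true K)
  simp only [Fin.update_cons_zero] at hdiff
  have htwo := two_point_exp_le hp0 hp1 (a := s * (f (Fin.cons true K) - m))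
    (b := s * (f (Fin.cons false K) - m)) (by simp only [m, averageHead]; ring)
  have hsplit : ∀ x, exp (s * (x - μ)) = exp (s * (m - μ)) * exp (s * (x - m)) :=
    fun x => by rw [← exp_add]; ring_nf
  rw [hsplit (f (Fin.cons true K)), hsplit (f (Fin.cons false K)), mul_left_comm p,
    mul_left_comm (1 - p), ← mul_add]
  gcongr
  refine htwo.trans (exp_le_exp.2 ?_)
  rw [← mul_sub, mul_pow, sub_sub_sub_cancel_right]
  gcongr s ^ 2 * ?_ / 8
  exact sq_le_sq' (abs_le.1 hdiff).1 (abs_le.1 hdiff).2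

lemma BoundedDiff.piBernMean_exp_le_fin (hp0 : 0 ≤ p) (hp1 : p ≤ 1) {c : ℝ} (s : ℝ) :
    ∀ {n : ℕ} {f : (Fin n → Bool) → ℝ}, BoundedDiff c f →
      piBernMean p (fun J => exp (s * (f J - piBernMean p f))) ≤ exp (s ^ 2 * n * c ^ 2 / 8)
  | 0, f, _ => by simp [piBernMean, piBernWeight]
  | n + 1, f, hf => by
    have hμ := piBernMean_fin_succ (p := p) f
    calc piBernMean p (fun J => exp (s * (f J - piBernMean p f)))
        = piBernMean p (fun K => p * exp (s * (f (Fin.cons true K) - piBernMean p f))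
            + (1 - p) * exp (s * (f (Fin.cons false K) - piBernMean p f))) :=
          piBernMean_fin_succ _
      _ ≤ piBernMean p (fun K => exp (s * (averageHead p f K - piBernMean p (averageHead p f)))
            * exp (s ^ 2 * c ^ 2 / 8)) := by
          rw [← hμ]; exact piBernMean_mono hp0 hp1 (hf.exp_cons_le hp0 hp1 s _)
      _ ≤ exp (s ^ 2 * n * c ^ 2 / 8) * exp (s ^ 2 * c ^ 2 / 8) := by
          rw [piBernMean_mul_const]
          gcongr
          exact piBernMean_exp_le_fin hp0 hp1 s (boundedDiff_averageHead hp0 hp1 hf)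
      _ = exp (s ^ 2 * (n + 1 : ℕ) * c ^ 2 / 8) := by rw [← exp_add]; push_cast; ring_nf

lemma BoundedDiff.piBernMean_exp_le [Fintype ι] [DecidableEq ι] (hp0 : 0 ≤ p) (hp1 : p ≤ 1)
    {c : ℝ} {f : (ι → Bool) → ℝ} (hf : BoundedDiff c f) (s : ℝ) :
    piBernMean p (fun J => exp (s * (f J - piBernMean p f))) ≤
      exp (s ^ 2 * Fintype.card ι * c ^ 2 / 8) := by
  let e := Fintype.equivFin ι
  have h := (hf.comp_equiv e).piBernMean_exp_le_fin hp0 hp1 s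
  rw [← piBernMean_comp_equiv e f] at h
  exact (piBernMean_comp_equiv e _).trans_le h

lemma BoundedDiff.sum_filter_sub_piBernMean_ge_le [Fintype ι] [DecidableEq ι] (hp0 : 0 ≤ p)
    (hp1 : p ≤ 1) {c v t : ℝ} {f : (ι → Bool) → ℝ} (hf : BoundedDiff c f) (hv : 0 < v)
    (hcv : Fintype.card ι * c ^ 2 ≤ v) (ht : 0 ≤ t) :
    ∑ J : ι → Bool with t ≤ f J - piBernMean p f, piBernWeight p J ≤ exp (-2 * t ^ 2 / v) := by
  set μ := piBernMean p f
  -- Chernoff's bound at the optimal exponent `s = 4t/v`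
  set s := 4 * t / v
  have hs : 0 ≤ s := by positivity
  calc ∑ J : ι → Bool with t ≤ f J - μ, piBernWeight p J
      ≤ ∑ J : ι → Bool with t ≤ f J - μ, piBernWeight p J * exp (s * (f J - μ) - s * t) := by
        refine sum_le_sum fun J hJ => le_mul_of_one_le_right (piBernWeight_nonneg hp0 hp1 J) ?_
        rw [one_le_exp_iff, ← mul_sub]
        exact mul_nonneg hs (sub_nonneg.2 (mem_filter.1 hJ).2)
    _ ≤ ∑ J, piBernWeight p J * exp (s * (f J - μ) - s * t) :=
        sum_le_sum_of_subset_of_nonneg (filter_subset _ univ) fun J _ _ =>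
          mul_nonneg (piBernWeight_nonneg hp0 hp1 J) (exp_pos _).le
    _ = piBernMean p (fun J => exp (s * (f J - μ)) * exp (-(s * t))) :=
        sum_congr rfl fun J _ => by beta_reduce; rw [← exp_add, ← sub_eq_add_neg]
    _ ≤ exp (s ^ 2 * v / 8) * exp (-(s * t)) := by
        rw [piBernMean_mul_const]
        gcongr
        refine (hf.piBernMean_exp_le hp0 hp1 s).trans (exp_le_exp.2 ?_)
        rw [mul_assoc]
        gcongr
    _ = exp (-2 * t ^ 2 / v) := by
        rw [← exp_add]
        congr 1
        simp only [s]
        field_simp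
        ring

lemma BoundedDiff.neg [DecidableEq ι] {c : ℝ} {f : (ι → Bool) → ℝ} (hf : BoundedDiff c f) :
    BoundedDiff c (-f) := fun i J => by
  simpa only [Pi.neg_apply, neg_sub_neg, abs_sub_comm] using hf i J

lemma measureReal_bern_singleton (hp0 : 0 ≤ p) (hp1 : p ≤ 1) (b : Bool) :
    (bern p).real {b} = if b then p else 1 - p := by
  cases b <;> simp [bern, measureReal_def, hp0, hp1]

lemma measureReal_pi_bern_singleton [Fintype ι] (hp0 : 0 ≤ p) (hp1 : p ≤ 1) (J : ι → Bool) :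
    (Measure.pi fun _ : ι => bern p).real {J} = piBernWeight p J := by
  rw [measureReal_def, Measure.pi_singleton, ENNReal.toReal_prod, piBernWeight]
  exact prod_congr rfl fun i _ => measureReal_bern_singleton hp0 hp1 (J i)

lemma measureReal_pi_bern [Fintype ι] [DecidableEq ι] (hp0 : 0 ≤ p) (hp1 : p ≤ 1)
    (s : Set (ι → Bool)) :
    (Measure.pi fun _ : ι => bern p).real s = ∑ J with J ∈ s, piBernWeight p J := by
  have hs : s = ↑(univ.filter (· ∈ s)) := by ext; simp
  conv_lhs => rw [hs, ← sum_measureReal_singleton]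
  exact sum_congr rfl fun J _ => measureReal_pi_bern_singleton hp0 hp1 J

lemma integral_pi_bern [Fintype ι] [DecidableEq ι] (hp0 : 0 ≤ p) (hp1 : p ≤ 1)
    (f : (ι → Bool) → ℝ) :
    ∫ J, f J ∂(Measure.pi fun _ : ι => bern p) = piBernMean p f := by
  rw [integral_fintype .of_finite, piBernMean]
  simp only [measureReal_pi_bern_singleton hp0 hp1, smul_eq_mul]

/-- McDiarmid's bounded-differences inequality for independent Bernoulli variables. -/
theorem BoundedDiff.measureReal_abs_sub_integral_ge_le [Fintype ι] [DecidableEq ι]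
    (hp0 : 0 ≤ p) (hp1 : p ≤ 1) {c v t : ℝ} {f : (ι → Bool) → ℝ} (hf : BoundedDiff c f)
    (hv : 0 < v) (hcv : Fintype.card ι * c ^ 2 ≤ v) (ht : 0 ≤ t) :
    (Measure.pi fun _ : ι => bern p).real
        {J | t ≤ |f J - ∫ J', f J' ∂Measure.pi fun _ : ι => bern p|} ≤
      2 * exp (-2 * t ^ 2 / v) := by
  set P := Measure.pi fun _ : ι => bern p
  have upper : ∀ g : (ι → Bool) → ℝ, BoundedDiff c g →
      P.real {J | t ≤ g J - ∫ J', g J' ∂P} ≤ exp (-2 * t ^ 2 / v) := fun g hg => by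
    simpa only [P, measureReal_pi_bern hp0 hp1, integral_pi_bern hp0 hp1, Set.mem_ofPred_eq] using
      hg.sum_filter_sub_piBernMean_ge_le hp0 hp1 hv hcv ht
  have hsub : {J | t ≤ |f J - ∫ J', f J' ∂P|} ⊆
      {J | t ≤ f J - ∫ J', f J' ∂P} ∪ {J | t ≤ (-f) J - ∫ J', (-f) J' ∂P} := fun J hJ => by
    simp only [Set.mem_ofPred_eq, Set.mem_union, Pi.neg_apply, integral_neg, neg_sub_neg] at hJ ⊢
    rcases le_abs.1 hJ with h | h
    · exact Or.inl h
    · exact Or.inr (by linarith)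
  calc P.real {J | t ≤ |f J - ∫ J', f J' ∂P|}
      ≤ P.real {J | t ≤ f J - ∫ J', f J' ∂P} + P.real {J | t ≤ (-f) J - ∫ J', (-f) J' ∂P} :=
        (measureReal_mono hsub).trans (measureReal_union_le _ _)
    _ ≤ 2 * exp (-2 * t ^ 2 / v) := by linarith [upper f hf, upper (-f) hf.neg]

end BernoulliProduct

lemma abs_log_sum_mul_exp_sub_le {α : Type*} [Fintype α] {w φ ψ : α → ℝ} {c : ℝ}
    (hw : ∀ a, 0 ≤ w a) (hw' : ∃ a, w a ≠ 0) (h : ∀ a, |φ a - ψ a| ≤ c) :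
    |log (∑ a, w a * exp (φ a)) - log (∑ a, w a * exp (ψ a))| ≤ c := by
  have hpos : ∀ χ : α → ℝ, 0 < ∑ a, w a * exp (χ a) := fun χ => by
    obtain ⟨a, ha⟩ := hw'
    exact sum_pos' (fun b _ => mul_nonneg (hw b) (exp_pos _).le)
      ⟨a, mem_univ a, mul_pos ((hw a).lt_of_ne' ha) (exp_pos _)⟩
  have hle : ∀ χ χ' : α → ℝ, (∀ a, χ a ≤ c + χ' a) →
      log (∑ a, w a * exp (χ a)) ≤ c + log (∑ a, w a * exp (χ' a)) := fun χ χ' hχ => by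
    rw [← log_exp c, ← log_mul (exp_pos c).ne' (hpos χ').ne', mul_sum]
    refine log_le_log (hpos χ) (sum_le_sum fun a _ => ?_)
    rw [mul_left_comm, ← exp_add]
    exact mul_le_mul_of_nonneg_left (exp_le_exp.2 (hχ a)) (hw a)
  refine abs_sub_le_iff.2 ⟨?_, ?_⟩
  · linarith [hle φ ψ fun a => by linarith [(abs_le.1 (h a)).2]]
  · linarith [hle ψ φ fun a => by linarith [(abs_le.1 (h a)).1]]

lemma abs_spin (b : Bool) : |spin b| = 1 := by cases b <;> simp [spin]

lemma Zg_eq_sum (N : ℕ) (p β : ℝ) (g : ℝ → ℝ) (J : Couplings N) :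
    Zg N p β g J = ∑ σ, g (mag σ) * exp (-β * Delta N p J σ) := by
  rw [Zg, ← sum_fiberwise_of_maps_to (g := mag) (t := GammaF N)
    fun σ _ => mem_image_of_mem _ (mem_univ σ)]
  refine sum_congr rfl fun m _ => ?_
  rw [level, mul_sum]
  exact sum_congr rfl fun σ hσ => by rw [(mem_filter.1 hσ).2]

lemma Delta_update_true_sub_update_false (N : ℕ) (p : ℝ) (J : Couplings N) (e : CIdx N)
    (σ : Conf N) :
    Delta N p (update J e true) σ - Delta N p (update J e false) σ =
      -((N : ℝ) * p)⁻¹ * (spin (σ e.1.1) * spin (σ e.1.2)) := by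
  rw [Delta, Delta, ← mul_sub, ← sum_sub_distrib, sum_eq_single e]
  · simp only [Jval, update_self, ↓reduceIte, Bool.false_eq_true]
    ring
  · intro e' _ he'
    simp only [Jval, update_of_ne he', sub_self]
  · exact fun he => absurd (mem_univ e) he

lemma boundedDiff_natCast_mul_Fg {N : ℕ} {p β : ℝ} {g : ℝ → ℝ} (hp : 0 ≤ p) (hβ : 0 ≤ β)
    (hg : ∀ m ∈ GammaF N, 0 ≤ g m) (hg' : ∃ m ∈ GammaF N, g m ≠ 0) :
    BoundedDiff (β / (N * p)) (fun J => (N : ℝ) * Fg N p β g J) := fun e J => by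
  have hlog : |log (Zg N p β g (update J e true)) - log (Zg N p β g (update J e false))| ≤
      β / (N * p) := by
    rw [Zg_eq_sum, Zg_eq_sum]
    refine abs_log_sum_mul_exp_sub_le (fun σ => hg _ (mem_image_of_mem _ (mem_univ σ))) ?_
      fun σ => ?_
    · obtain ⟨m, hm, hgm⟩ := hg'
      obtain ⟨σ, -, rfl⟩ := mem_image.1 hm
      exact ⟨σ, hgm⟩
    · rw [← mul_sub, Delta_update_true_sub_update_false, abs_mul, abs_mul, abs_mul, abs_spin,
        abs_spin, abs_neg, abs_neg, abs_of_nonneg hβ, abs_inv, abs_of_nonneg (by positivity)]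
      simp [div_eq_mul_inv]
  calc |(N : ℝ) * Fg N p β g (update J e true) - N * Fg N p β g (update J e false)|
      = |(N : ℝ) * (N : ℝ)⁻¹| * |log (Zg N p β g (update J e true))
          - log (Zg N p β g (update J e false))| := by
        rw [Fg, Fg, ← mul_assoc, ← mul_assoc, ← mul_sub, abs_mul]
    _ ≤ 1 * (β / (N * p)) := by
        gcongr
        rw [abs_of_nonneg (by positivity)]
        exact mul_inv_le_one
    _ = β / (N * p) := one_mul _

lemma card_CIdx_le (N : ℕ) : Fintype.card (CIdx N) ≤ N ^ 2 :=
  (Fintype.card_subtype_le _).trans (by simp [Fintype.card_prod, sq])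

/-- sub-Gaussian concentration of `N(F_{N,g} - p_{N,g})`. -/
theorem concentration_Fg :
    ∃ c₁ c₂ : ℝ, 0 < c₁ ∧ 0 < c₂ ∧
    ∀ (N : ℕ) (p β : ℝ), 0 < p → p < 1 → 0 < β →
    ∀ g : ℝ → ℝ, (∀ m ∈ GammaF N, 0 ≤ g m) → (∃ m ∈ GammaF N, g m ≠ 0) →
    ∀ t : ℝ, 0 < t →
      (PJ N p {J : Couplings N | t ≤ |(N : ℝ) * (Fg N p β g J - pg N p β g)|}).toReal ≤
        c₁ * Real.exp (-(2 * c₂ * p ^ 2 * t ^ 2 / β ^ 2)) := by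
  refine ⟨2, 1, two_pos, one_pos, fun N p β hp hp1 hβ g hg hg' t ht => ?_⟩
  have hv : Fintype.card (CIdx N) * (β / (N * p)) ^ 2 ≤ β ^ 2 / p ^ 2 := by
    calc _ ≤ (N : ℝ) ^ 2 * (β / (N * p)) ^ 2 := by gcongr; exact_mod_cast card_CIdx_le N
      _ ≤ β ^ 2 / p ^ 2 := by
        rcases eq_or_ne N 0 with rfl | hN
        · rw [CharP.cast_eq_zero, zero_pow two_ne_zero, zero_mul]
          positivity
        · exact le_of_eq (by field_simp)
  have h := (boundedDiff_natCast_mul_Fg hp.le hβ.le hg hg').measureReal_abs_sub_integral_ge_le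
    hp.le hp1.le (by positivity) hv ht.le
  rw [integral_const_mul] at h
  calc (PJ N p {J | t ≤ |(N : ℝ) * (Fg N p β g J - pg N p β g)|}).toReal
      = (Measure.pi fun _ => bern p).real
          {J | t ≤ |(N : ℝ) * Fg N p β g J - N * pg N p β g|} := by simp only [mul_sub]; rfl
    _ ≤ 2 * exp (-2 * t ^ 2 / (β ^ 2 / p ^ 2)) := h
    _ = 2 * exp (-(2 * 1 * p ^ 2 * t ^ 2 / β ^ 2)) := by congr 2; field_simp

end RDCW
end
end

section
/- Let m₁<m₂∈Γ_N. Then the flow Ψ_N(σ,σ')=φ_N(m(σ),m(σ')) on S_N is a unitary antisymmetric flow from S_N[m₁] to S_N[m₂]; that is: (i) Ψ_N(σ,σ')=−Ψ_N(σ',σ) for all σ∼σ'; (ii) Kirchhoff's law: ∑_{σ'∼σ} Ψ_N(σ,σ')=0 for every σ∈S_N∖(S_N[m₁]∪S_N[m₂]); (iii) unit total flow: ∑_{a∈S_N[m₁]} ∑_{σ'∼a} Ψ_N(a,σ') = 1 = ∑_{b∈S_N[m₂]} ∑_{σ∼b} Ψ_N(σ,b). -/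
open MeasureTheory Filter Finset
open scoped Classical ENNReal NNReal Topology

noncomputable section

namespace RDCW

/-!
A configuration with `k` up-spins has magnetisation `(2k - N)/N`, `N - k` neighbours one level
up, `k` neighbours one level down, and its level has `C(N,k)` elements, so `e^{-N I_N}` is that
binomial coefficient. Hence `Ψ_N` sends `1/C(N,k)` out of every configuration of level `k` into
level `k + 1` when `k₁ ≤ k < k₂`, and `(N - k) C(N,k) = (k + 1) C(N,k+1)` makes it antisymmetric.
The net outflow of a configuration of level `k` is `([k₁ ≤ k < k₂] - [k₁ < k ≤ k₂]) / C(N,k)`: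
it vanishes off the two end levels and sums to `1` over level `k₁` and to `-1` over level `k₂`,
which antisymmetry turns into a total inflow `1`.
-/

def upCount {N : ℕ} (σ : Conf N) : ℕ := #{i | σ i = true}

def levelMag (N k : ℕ) : ℝ := (2 * k - N) / N

def flipSpin {N : ℕ} (σ : Conf N) (i : Fin N) : Conf N := Function.update σ i (!σ i)

section

variable {N : ℕ}

lemma upCount_le (σ : Conf N) : upCount σ ≤ N := by
  simpa [upCount] using card_filter_le (univ : Finset (Fin N)) fun i => σ i = true

lemma mag_eq_levelMag (σ : Conf N) : mag σ = levelMag N (upCount σ) := by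
  have hsplit := card_filter_add_card_filter_not (s := univ) fun i : Fin N => σ i = true
  have hN : (upCount σ : ℝ) + #{i | ¬σ i = true} = N := by
    simpa [upCount] using congrArg (Nat.cast (R := ℝ)) hsplit
  have hsum : ∑ i, spin (σ i) = upCount σ - #{i | ¬σ i = true} := by
    simp [spin, sum_ite, upCount]
    ring
  rw [mag, levelMag, hsum, ← hN]
  ring

lemma levelMag_mono (N : ℕ) : Monotone (levelMag N) := fun k k' h => by
  unfold levelMag
  gcongr

lemma levelMag_strictMono (hN : 0 < N) : StrictMono (levelMag N) := fun k k' h => by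
  unfold levelMag
  gcongr

lemma levelMag_succ (N k : ℕ) : levelMag N (k + 1) = levelMag N k + 2 / N := by
  unfold levelMag
  push_cast
  ring

lemma mag_eq_levelMag_iff (hN : 0 < N) (σ : Conf N) (k : ℕ) :
    mag σ = levelMag N k ↔ upCount σ = k := by
  rw [mag_eq_levelMag, (levelMag_strictMono hN).injective.eq_iff]

lemma card_upCount_eq (k : ℕ) : #{σ : Conf N | upCount σ = k} = N.choose k := by
  rw [show N.choose k = #(powersetCard k (univ : Finset (Fin N))) by simp]
  refine card_bij' (fun σ _ => ({i | σ i = true} : Finset (Fin N))) (fun s _ i => decide (i ∈ s))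
    ?_ ?_ ?_ ?_
  · intro σ hσ
    simpa [upCount] using (mem_filter.mp hσ).2
  · intro s hs
    exact mem_filter.mpr ⟨mem_univ _, by simpa [upCount] using hs⟩
  · intro σ _
    ext i
    simp
  · intro s _
    ext i
    simp

lemma card_level_levelMag (hN : 0 < N) (k : ℕ) : #(level N (levelMag N k)) = N.choose k := by
  simp only [level, mag_eq_levelMag_iff hN, card_upCount_eq]

lemma exp_neg_mul_IN_levelMag (hN : 0 < N) {k : ℕ} (hk : k ≤ N) :
    Real.exp (-N * IN N (levelMag N k)) = N.choose k := by
  have hchoose : (0 : ℝ) < N.choose k := by exact_mod_cast Nat.choose_pos hk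
  rw [IN, card_level_levelMag hN, ← mul_assoc, neg_mul_neg, mul_inv_cancel₀ (by positivity),
    one_mul, Real.exp_log hchoose]

lemma sub_mul_choose_eq {k : ℕ} (hk : k < N) :
    ((N - k) * N.choose k : ℝ) = (k + 1 : ℕ) * N.choose (k + 1) := by
  rw [← Nat.cast_sub hk.le]
  exact_mod_cast (mul_comm _ _).trans ((Nat.choose_succ_right_eq N k).symm.trans (mul_comm _ _))

lemma nbr_comm {σ σ' : Conf N} : Nbr σ σ' ↔ Nbr σ' σ := by
  change hammingDist σ σ' = 1 ↔ hammingDist σ' σ = 1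
  rw [hammingDist_comm]

lemma nbr_iff_exists_flipSpin {σ σ' : Conf N} : Nbr σ σ' ↔ ∃ i, σ' = flipSpin σ i := by
  simp only [Nbr, card_eq_one, Finset.ext_iff, mem_filter, mem_univ, true_and, mem_singleton,
    funext_iff, flipSpin, Function.update_apply]
  refine exists_congr fun i => forall_congr' fun j => ?_
  by_cases hj : j = i
  · subst hj
    cases σ j <;> cases σ' j <;> simp
  · simp [hj, eq_comm]

lemma flipSpin_injective (σ : Conf N) : Function.Injective (flipSpin σ) := by
  intro i j h
  by_contra hij
  have := congrFun h i
  simp [flipSpin, hij] at this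

lemma upCount_flipSpin (σ : Conf N) (i : Fin N) :
    upCount (flipSpin σ i) = if σ i then upCount σ - 1 else upCount σ + 1 := by
  unfold upCount
  cases h : σ i
  · have : univ.filter (flipSpin σ i · = true) = insert i (univ.filter (σ · = true)) := by
      ext j
      by_cases hj : j = i <;> simp [flipSpin, Function.update_apply, hj, h]
    rw [this, card_insert_of_notMem (by simp [h])]
    rfl
  · have : univ.filter (flipSpin σ i · = true) = (univ.filter (σ · = true)).erase i := by
      ext j
      by_cases hj : j = i <;> simp [flipSpin, Function.update_apply, hj, h]
    rw [this, card_erase_of_mem (by simp [h])]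
    rfl

lemma sum_nbr_eq (σ : Conf N) (F : ℕ → ℝ) :
    ∑ σ' ∈ univ.filter (fun σ' => Nbr σ σ'), F (upCount σ') =
      (N - upCount σ) * F (upCount σ + 1) + upCount σ * F (upCount σ - 1) := by
  have hnbr : univ.filter (fun σ' => Nbr σ σ') = univ.image (flipSpin σ) := by
    ext σ'
    simp [nbr_iff_exists_flipSpin, eq_comm]
  have hdown : (#{i | ¬σ i = true} : ℝ) = N - upCount σ := by
    have := card_filter_add_card_filter_not (s := univ) fun i : Fin N => σ i = true
    rw [eq_sub_iff_add_eq', upCount]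
    simpa using congrArg (Nat.cast (R := ℝ)) this
  rw [hnbr, sum_image fun i _ j _ h => flipSpin_injective σ h]
  simp only [upCount_flipSpin, apply_ite F, sum_ite, sum_const, nsmul_eq_mul, hdown]
  rw [upCount]
  ring

end

section

variable {N k₁ k₂ : ℕ}

lemma phiFlow_levelMag (hN : 0 < N) (hk₂ : k₂ ≤ N) (k k' : ℕ) :
    phiFlow N (levelMag N k₁) (levelMag N k₂) (levelMag N k) (levelMag N k') =
      if k' = k + 1 ∧ k₁ ≤ k ∧ k < k₂ then ((N - k) * N.choose k : ℝ)⁻¹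
      else if k = k' + 1 ∧ k₁ < k ∧ k ≤ k₂ then -(k * N.choose k : ℝ)⁻¹
      else 0 := by
  have hmono := levelMag_strictMono hN
  have hN' : (N : ℝ) ≠ 0 := by positivity
  have hup : levelMag N k' = levelMag N k + 2 / N ↔ k' = k + 1 := by
    rw [← levelMag_succ, hmono.injective.eq_iff]
  have hdown : levelMag N k' = levelMag N k - 2 / N ↔ k = k' + 1 := by
    rw [eq_sub_iff_add_eq, ← levelMag_succ, hmono.injective.eq_iff, eq_comm]
  have hlt : levelMag N k ≤ levelMag N k₂ - 2 / N ↔ k < k₂ := by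
    rw [le_sub_iff_add_le, ← levelMag_succ, hmono.le_iff_le, Nat.succ_le_iff]
  have hgt : levelMag N k₁ + 2 / N ≤ levelMag N k ↔ k₁ < k := by
    rw [← levelMag_succ, hmono.le_iff_le, Nat.succ_le_iff]
  have hcoeff_up : (1 - levelMag N k) * N / 2 = N - k := by
    unfold levelMag; field_simp; ring
  have hcoeff_down : (1 + levelMag N k) * N / 2 = k := by
    unfold levelMag; field_simp; ring
  simp only [phiFlow, hup, hdown, hlt, hgt, hmono.le_iff_le, hcoeff_up, hcoeff_down]
  split_ifs <;>
    first
    | rfl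
    | rw [exp_neg_mul_IN_levelMag hN (by omega)]

lemma phiFlow_levelMag_antisymm (hN : 0 < N) (hk₂ : k₂ ≤ N) (k k' : ℕ) :
    phiFlow N (levelMag N k₁) (levelMag N k₂) (levelMag N k) (levelMag N k') =
      -phiFlow N (levelMag N k₁) (levelMag N k₂) (levelMag N k') (levelMag N k) := by
  simp only [phiFlow_levelMag hN hk₂]
  split_ifs <;> first
    | omega
    | exact neg_zero.symm
    | obtain ⟨rfl, -, hk⟩ := ‹k' = k + 1 ∧ k₁ ≤ k ∧ k < k₂›
      rw [neg_neg, sub_mul_choose_eq (by omega)]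
    | obtain ⟨rfl, -, hk⟩ := ‹k = k' + 1 ∧ k₁ ≤ k' ∧ k' < k₂›
      rw [sub_mul_choose_eq (by omega)]

lemma phiFlow_mag_antisymm (hN : 0 < N) (hk₂ : k₂ ≤ N) (σ σ' : Conf N) :
    phiFlow N (levelMag N k₁) (levelMag N k₂) (mag σ) (mag σ') =
      -phiFlow N (levelMag N k₁) (levelMag N k₂) (mag σ') (mag σ) := by
  simp only [mag_eq_levelMag]
  exact phiFlow_levelMag_antisymm hN hk₂ _ _

lemma sum_nbr_phiFlow (hN : 0 < N) (hk₂ : k₂ ≤ N) (σ : Conf N) :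
    ∑ σ' ∈ univ.filter (fun σ' => Nbr σ σ'),
        phiFlow N (levelMag N k₁) (levelMag N k₂) (mag σ) (mag σ') =
      ((if k₁ ≤ upCount σ ∧ upCount σ < k₂ then 1 else 0) -
        (if k₁ < upCount σ ∧ upCount σ ≤ k₂ then 1 else 0)) / N.choose (upCount σ) := by
  simp only [mag_eq_levelMag]
  refine (sum_nbr_eq σ fun k => phiFlow N (levelMag N k₁) (levelMag N k₂)
    (levelMag N (upCount σ)) (levelMag N k)).trans ?_
  generalize upCount σ = k
  have hup : (N - k : ℝ) * phiFlow N (levelMag N k₁) (levelMag N k₂)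
      (levelMag N k) (levelMag N (k + 1)) =
        if k₁ ≤ k ∧ k < k₂ then (N.choose k : ℝ)⁻¹ else 0 := by
    rw [phiFlow_levelMag hN hk₂]
    split_ifs <;> try omega
    · have : (N - k : ℝ) ≠ 0 := sub_ne_zero.mpr (by exact_mod_cast (by omega : N ≠ k))
      field_simp
    · rw [mul_zero]
  have hdown : (k : ℝ) * phiFlow N (levelMag N k₁) (levelMag N k₂)
      (levelMag N k) (levelMag N (k - 1)) =
        -if k₁ < k ∧ k ≤ k₂ then (N.choose k : ℝ)⁻¹ else 0 := by
    rw [phiFlow_levelMag hN hk₂]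
    split_ifs <;> try omega
    · have : (k : ℝ) ≠ 0 := by exact_mod_cast (by omega : k ≠ 0)
      field_simp
    · rw [mul_zero, neg_zero]
  rw [hup, hdown]
  split_ifs <;> ring

lemma sum_level_sum_nbr_phiFlow (hN : 0 < N) (hk₂ : k₂ ≤ N) {k : ℕ} (hk : k ≤ N) :
    ∑ a ∈ level N (levelMag N k), ∑ σ' ∈ univ.filter (fun σ' => Nbr a σ'),
        phiFlow N (levelMag N k₁) (levelMag N k₂) (mag a) (mag σ') =
      (if k₁ ≤ k ∧ k < k₂ then 1 else 0) - (if k₁ < k ∧ k ≤ k₂ then 1 else 0) := by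
  have hC : (N.choose k : ℝ) ≠ 0 := by exact_mod_cast (Nat.choose_pos hk).ne'
  have hσ : ∀ a ∈ level N (levelMag N k), upCount a = k := fun a ha =>
    (mag_eq_levelMag_iff hN a k).mp (mem_filter.mp ha).2
  rw [sum_congr rfl fun a ha => by rw [sum_nbr_phiFlow hN hk₂, hσ a ha], sum_const,
    card_level_levelMag hN, nsmul_eq_mul, mul_div_cancel₀ _ hC]

lemma sum_nbr_phiFlow_in (hN : 0 < N) (hk₂ : k₂ ≤ N) (b : Conf N) :
    ∑ σ ∈ univ.filter (fun σ => Nbr σ b),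
        phiFlow N (levelMag N k₁) (levelMag N k₂) (mag σ) (mag b) =
      -∑ σ ∈ univ.filter (fun σ => Nbr b σ),
        phiFlow N (levelMag N k₁) (levelMag N k₂) (mag b) (mag σ) := by
  rw [← sum_neg_distrib]
  exact sum_congr (filter_congr fun σ _ => nbr_comm) fun σ _ => phiFlow_mag_antisymm hN hk₂ σ b

end

/-- `Ψ_N` is a unitary antisymmetric flow from `S_N[m₁]` to `S_N[m₂]`. -/
theorem flow_unitary (N : ℕ) (m₁ m₂ : ℝ) (h₁ : m₁ ∈ Gamma N) (h₂ : m₂ ∈ Gamma N)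
    (h12 : m₁ < m₂) :
    (∀ σ σ' : Conf N, Nbr σ σ' →
      phiFlow N m₁ m₂ (mag σ) (mag σ') = -phiFlow N m₁ m₂ (mag σ') (mag σ)) ∧
    (∀ σ : Conf N, mag σ ≠ m₁ → mag σ ≠ m₂ →
      ∑ σ' ∈ Finset.univ.filter (fun σ' => Nbr σ σ'),
        phiFlow N m₁ m₂ (mag σ) (mag σ') = 0) ∧
    (∑ a ∈ level N m₁, ∑ σ' ∈ Finset.univ.filter (fun σ' => Nbr a σ'),
        phiFlow N m₁ m₂ (mag a) (mag σ') = 1) ∧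
    (∑ b ∈ level N m₂, ∑ σ ∈ Finset.univ.filter (fun σ => Nbr σ b),
        phiFlow N m₁ m₂ (mag σ) (mag b) = 1) := by
  obtain ⟨σ₁, rfl⟩ : ∃ σ, mag σ = m₁ := h₁
  obtain ⟨σ₂, rfl⟩ : ∃ σ, mag σ = m₂ := h₂
  rw [mag_eq_levelMag σ₁, mag_eq_levelMag σ₂] at h12 ⊢
  have hk₁₂ : upCount σ₁ < upCount σ₂ := (levelMag_mono N).reflect_lt h12
  have hk₂ := upCount_le σ₂
  have hN : 0 < N := by omega
  refine ⟨fun σ σ' _ => phiFlow_mag_antisymm hN hk₂ σ σ', fun σ hσ₁ hσ₂ => ?_, ?_, ?_⟩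
  · rw [Ne, mag_eq_levelMag_iff hN] at hσ₁ hσ₂
    have hinterior : upCount σ₁ ≤ upCount σ ∧ upCount σ < upCount σ₂ ↔
        upCount σ₁ < upCount σ ∧ upCount σ ≤ upCount σ₂ := by omega
    simp [sum_nbr_phiFlow hN hk₂, hinterior]
  · rw [sum_level_sum_nbr_phiFlow hN hk₂ (upCount_le σ₁)]
    simp [hk₁₂]
  · simp only [sum_nbr_phiFlow_in hN hk₂, sum_neg_distrib,
      sum_level_sum_nbr_phiFlow hN hk₂ hk₂]
    simp [hk₁₂]

end RDCW
end
end
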